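/- As j → ∞, | ∫_ℝ ∫_ℝ ∫_ℝ |ψ̂(2^{j₂(j)} λ₁)|² · ψ̂(2^j(λ₁+λ₂)) · ψ̂(2^j(λ₃−λ₁)) · f_G(λ₁) · f_{c,j}(λ₂) · f_{c,j}(λ₃) dλ₁ dλ₂ dλ₃ | = O(2^{−jβ} · 2^{−j₂(j)β}). -/

import Mathlib

open MeasureTheory Filter

/-!
The middle factors `ψ̂(2^j(λ₁+λ₂))`, `ψ̂(2^j(λ₃-λ₁))` are bounded by `‖ψ‖₁`, so the triple
integral is at most `‖ψ‖₁² σ²_{j₂(j)} (∫ |f_{c,j}|)²`. Since `f_G(λ) ≍ |λ|^{β-1}` near `0` and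
`|ψ̂(λ)| ≍ |λ|^α` near `0` with exponential decay at infinity, the substitution `μ = aλ` gives
`∫ f_G |ψ̂(a ·)|ⁿ ≍ a^{-β}` for `n = 1, 2`. Hence `σ²_{j₂(j)} = O(2^{-j₂(j)β})` and
`(∫ |f_{c,j}|)² = (∫ f_G |ψ̂(2^j ·)|)² / σ_j² = O(2^{-2jβ} / 2^{-jβ}) = O(2^{-jβ})`.
-/

/-- Fourier transform `ψ̂(λ) = ∫ e^{-iλt} ψ(t) dt`. -/
noncomputable def fhat (ψ : ℝ → ℝ) (l : ℝ) : ℂ :=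
  ∫ t : ℝ, Complex.exp (-(Complex.I * (l : ℂ) * (t : ℂ))) * (ψ t : ℂ)

lemma norm_fhat_le (ψ : ℝ → ℝ) (l : ℝ) : ‖fhat ψ l‖ ≤ ∫ t, |ψ t| := by
  refine (norm_integral_le_integral_norm _).trans_eq (integral_congr_ae (ae_of_all _ fun t => ?_))
  simp [Complex.norm_exp]

lemma integrable_comp_abs_of_integrableOn_Ioi {E : Type*} [NormedAddCommGroup E] {f : ℝ → E}
    (hf : IntegrableOn f (Set.Ioi 0)) : Integrable fun x => f |x| := by
  have hIoi : IntegrableOn (fun x => f |x|) (Set.Ioi 0) :=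
    hf.congr_fun (fun x hx => by rw [abs_of_pos hx]) measurableSet_Ioi
  have hIic : IntegrableOn (fun x => f |x|) (Set.Iic 0) := by
    rw [← Measure.map_neg_eq_self (volume : Measure ℝ),
      measurableEmbedding_neg.integrableOn_map_iff]
    simp_rw [Function.comp_def, abs_neg, Set.neg_preimage, Set.neg_Iic, neg_zero]
    exact (integrableOn_Ici_iff_integrableOn_Ioi).mpr hIoi
  rw [← integrableOn_univ, ← Set.Iic_union_Ioi (a := (0 : ℝ))]
  exact hIic.union hIoi

lemma integrable_abs_rpow_mul_exp_neg_mul_abs {p c : ℝ} (hp : -1 < p) (hc : 0 < c) :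
    Integrable fun x : ℝ => |x| ^ p * Real.exp (-c * |x|) := by
  refine integrable_comp_abs_of_integrableOn_Ioi (f := fun x => x ^ p * Real.exp (-c * x)) ?_
  simpa only [Real.rpow_one] using integrableOn_rpow_mul_exp_neg_mul_rpow hp one_pos hc

lemma integrable_abs_rpow_mul_of_le {h : ℝ → ℝ} {p γ C c : ℝ} (hpγ : -1 < p + γ) (hc : 0 < c)
    (hm : AEStronglyMeasurable h) (hh0 : ∀ x, 0 ≤ h x)
    (hh : ∀ x, h x ≤ C * |x| ^ γ * Real.exp (-c * |x|)) :
    Integrable fun x => |x| ^ p * h x := by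
  refine ((integrable_abs_rpow_mul_exp_neg_mul_abs hpγ hc).const_mul C).mono'
    (((measurable_abs.pow_const p).aestronglyMeasurable).mul hm) ?_
  filter_upwards [Measure.ae_ne volume 0] with x hx
  have hx' : 0 < |x| := abs_pos.mpr hx
  rw [norm_mul, Real.norm_of_nonneg (Real.rpow_nonneg hx'.le p), Real.norm_of_nonneg (hh0 x),
    Real.rpow_add hx']
  calc |x| ^ p * h x ≤ |x| ^ p * (C * |x| ^ γ * Real.exp (-c * |x|)) := by gcongr; exact hh x
    _ = C * (|x| ^ p * |x| ^ γ * Real.exp (-c * |x|)) := by ring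

lemma abs_rpow_mul_comp_mul (h : ℝ → ℝ) (β : ℝ) {a : ℝ} (ha : 0 < a) (l : ℝ) :
    |l| ^ (β - 1) * h (a * l) = a ^ (1 - β) * (|a * l| ^ (β - 1) * h (a * l)) := by
  rw [abs_mul, abs_of_pos ha, Real.mul_rpow ha.le (abs_nonneg l), ← mul_assoc, ← mul_assoc,
    ← Real.rpow_add ha]
  simp

lemma integrable_abs_rpow_mul_comp_mul {h : ℝ → ℝ} {β a : ℝ} (ha : 0 < a)
    (hh : Integrable fun x => |x| ^ (β - 1) * h x) :
    Integrable fun l => |l| ^ (β - 1) * h (a * l) := by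
  simp_rw [abs_rpow_mul_comp_mul h β ha]
  exact (hh.comp_mul_left' ha.ne').const_mul _

lemma integral_abs_rpow_mul_comp_mul (h : ℝ → ℝ) (β : ℝ) {a : ℝ} (ha : 0 < a) :
    ∫ l, |l| ^ (β - 1) * h (a * l) = a ^ (-β) * ∫ x, |x| ^ (β - 1) * h x := by
  simp_rw [abs_rpow_mul_comp_mul h β ha]
  rw [integral_const_mul, Measure.integral_comp_mul_left (fun x => |x| ^ (β - 1) * h x) a,
    abs_of_pos (inv_pos.mpr ha), smul_eq_mul, ← mul_assoc, ← Real.rpow_neg_one, ← Real.rpow_add ha]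
  ring_nf

lemma integral_mul_comp_mul_le {f h : ℝ → ℝ} {β M a : ℝ} (ha : 0 < a)
    (hf0 : ∀ x, 0 ≤ f x) (hf : ∀ x ≠ 0, f x ≤ M * |x| ^ (β - 1)) (hh0 : ∀ x, 0 ≤ h x)
    (hh : Integrable fun x => |x| ^ (β - 1) * h x) :
    ∫ l, f l * h (a * l) ≤ M * (∫ x, |x| ^ (β - 1) * h x) * a ^ (-β) := by
  calc ∫ l, f l * h (a * l) ≤ ∫ l, M * (|l| ^ (β - 1) * h (a * l)) := by
        refine integral_mono_of_nonneg (ae_of_all _ fun l => mul_nonneg (hf0 l) (hh0 _))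
          ((integrable_abs_rpow_mul_comp_mul ha hh).const_mul M) ?_
        filter_upwards [Measure.ae_ne volume 0] with l hl
        rw [← mul_assoc]
        exact mul_le_mul_of_nonneg_right (hf l hl) (hh0 _)
    _ = M * (∫ x, |x| ^ (β - 1) * h x) * a ^ (-β) := by
        rw [integral_const_mul, integral_abs_rpow_mul_comp_mul h β ha]; ring

lemma continuous_mul_abs_rpow {C : ℝ → ℂ} (hC : Continuous C) {α : ℝ} (hα : 0 ≤ α) :
    Continuous fun x => C x * ((|x| ^ α : ℝ) : ℂ) :=
  hC.mul (Complex.continuous_ofReal.comp (continuous_abs.rpow_const fun _ => Or.inr hα))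

lemma norm_mul_abs_rpow_le {C : ℝ → ℂ} {K κ α x : ℝ} (h : ‖C x‖ ≤ K * Real.exp (-κ * |x|)) :
    ‖C x * ((|x| ^ α : ℝ) : ℂ)‖ ≤ K * |x| ^ α * Real.exp (-κ * |x|) := by
  rw [norm_mul, Complex.norm_real, Real.norm_of_nonneg (by positivity), mul_right_comm]
  exact mul_le_mul_of_nonneg_right h (by positivity)

lemma exists_integral_mul_norm_comp_mul_pow_le_rpow {f : ℝ → ℝ} {g : ℝ → ℂ}
    {β α M K κ P : ℝ} (hβα : 0 < β + α) (hκ : 0 < κ) (hf0 : ∀ x, 0 ≤ f x)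
    (hf : ∀ x ≠ 0, f x ≤ M * |x| ^ (β - 1)) (hg : AEStronglyMeasurable g)
    (hgP : ∀ x, ‖g x‖ ≤ P) (hg_decay : ∀ x, ‖g x‖ ≤ K * |x| ^ α * Real.exp (-κ * |x|))
    {n : ℕ} (hn : n ≠ 0) :
    ∃ D, ∀ a > 0, ∫ l, f l * ‖g (a * l)‖ ^ n ≤ D * a ^ (-β) := by
  have hdecay_pow : ∀ x, ‖g x‖ ^ n ≤ P ^ (n - 1) * K * |x| ^ α * Real.exp (-κ * |x|) := by
    intro x
    obtain ⟨m, rfl⟩ := Nat.exists_eq_succ_of_ne_zero hn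
    rw [pow_succ, Nat.succ_sub_one, mul_assoc, mul_assoc]
    exact mul_le_mul (pow_le_pow_left₀ (norm_nonneg _) (hgP x) m)
      (by rw [← mul_assoc]; exact hg_decay x) (norm_nonneg _)
      (pow_nonneg ((norm_nonneg _).trans (hgP x)) m)
  have hh0 : ∀ x, 0 ≤ ‖g x‖ ^ n := fun x => by positivity
  exact ⟨_, fun _ ha => integral_mul_comp_mul_le ha hf0 hf hh0
    (integrable_abs_rpow_mul_of_le (by linarith) hκ (hg.norm.pow n) hh0 hdecay_pow)⟩

lemma rpow_le_integral_mul_comp_mul {f h : ℝ → ℝ} {β ε δ c₁ c₂ a : ℝ} (hβ : β ≤ 1) (hδ : 0 < δ)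
    (ha : 0 < a) (haε : 2 * δ < a * ε) (hc₁ : 0 ≤ c₁) (hc₂ : 0 ≤ c₂)
    (hf : ∀ x ∈ Set.Ioo 0 ε, c₁ * x ^ (β - 1) ≤ f x) (hh : ∀ x ∈ Set.Icc δ (2 * δ), c₂ ≤ h x)
    (hf0 : ∀ x, 0 ≤ f x) (hh0 : ∀ x, 0 ≤ h x) (hint : Integrable fun l => f l * h (a * l)) :
    c₁ * c₂ * 2 ^ (β - 1) * δ ^ β * a ^ (-β) ≤ ∫ l, f l * h (a * l) := by
  set S := Set.Icc (δ / a) (2 * δ / a)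
  have hpt : ∀ l ∈ S, c₁ * (2 * δ / a) ^ (β - 1) * c₂ ≤ f l * h (a * l) := by
    rintro l ⟨hl₁, hl₂⟩
    have hl0 : 0 < l := (div_pos hδ ha).trans_le hl₁
    have hlε : l < ε := hl₂.trans_lt ((div_lt_iff₀' ha).mpr haε)
    have hal : a * l ∈ Set.Icc δ (2 * δ) := ⟨(div_le_iff₀' ha).mp hl₁, (le_div_iff₀' ha).mp hl₂⟩
    have hfl : c₁ * (2 * δ / a) ^ (β - 1) ≤ f l :=
      calc c₁ * (2 * δ / a) ^ (β - 1) ≤ c₁ * l ^ (β - 1) :=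
            mul_le_mul_of_nonneg_left (Real.rpow_le_rpow_of_nonpos hl0 hl₂ (by linarith)) hc₁
        _ ≤ f l := hf l ⟨hl0, hlε⟩
    exact mul_le_mul hfl (hh _ hal) hc₂ (hf0 l)
  calc c₁ * c₂ * 2 ^ (β - 1) * δ ^ β * a ^ (-β)
        = c₁ * (2 * δ / a) ^ (β - 1) * c₂ * volume.real S := by
        rw [Real.volume_real_Icc, max_eq_left (sub_nonneg.mpr (by gcongr; linarith)),
          Real.div_rpow (by positivity) ha.le, Real.mul_rpow zero_le_two hδ.le,
          Real.rpow_sub_one hδ.ne', Real.rpow_sub_one ha.ne', Real.rpow_neg ha.le]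
        field_simp
        ring
    _ ≤ ∫ l in S, f l * h (a * l) :=
        setIntegral_ge_of_const_le_real measurableSet_Icc measure_Icc_lt_top.ne hpt
          hint.integrableOn
    _ ≤ ∫ l, f l * h (a * l) :=
        setIntegral_le_integral hint (ae_of_all _ fun l => mul_nonneg (hf0 l) (hh0 _))

lemma exists_rpow_le_integral_mul_norm_comp_mul_sq {f C_f : ℝ → ℝ} {g C_g : ℝ → ℂ} {β α : ℝ}
    (hβ : β ≤ 1) (hα : 0 ≤ α) (hC_f : ContinuousAt C_f 0) (hC_f0 : 0 < C_f 0)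
    (hf0 : ∀ x, 0 ≤ f x) (hf : ∀ x ≠ 0, f x = C_f x * |x| ^ (β - 1))
    (hC_g : ContinuousAt C_g 0) (hC_g0 : C_g 0 ≠ 0) (hg : ∀ x, g x = C_g x * ((|x| ^ α : ℝ) : ℂ))
    (hint : ∀ a, Integrable fun l => f l * ‖g (a * l)‖ ^ 2) :
    ∃ c > 0, ∀ᶠ a in atTop, c * a ^ (-β) ≤ ∫ l, f l * ‖g (a * l)‖ ^ 2 := by
  obtain ⟨ε, hε, hC_fε⟩ :=
    Metric.eventually_nhds_iff.1 (hC_f.eventually (lt_mem_nhds (half_lt_self hC_f0)))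
  obtain ⟨ρ, hρ, hC_gρ⟩ := Metric.eventually_nhds_iff.1
    (hC_g.norm.eventually (lt_mem_nhds (half_lt_self (norm_pos_iff.2 hC_g0))))
  set δ := ρ / 4 with hδ_def
  have hδ : 0 < δ := by positivity
  have hf_lower : ∀ x ∈ Set.Ioo 0 ε, C_f 0 / 2 * x ^ (β - 1) ≤ f x := by
    rintro x ⟨hx0, hxε⟩
    rw [hf x hx0.ne', abs_of_pos hx0]
    refine mul_le_mul_of_nonneg_right (hC_fε ?_).le (Real.rpow_nonneg hx0.le _)
    rwa [Real.dist_0_eq_abs, abs_of_pos hx0]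
  have hg_lower : ∀ x ∈ Set.Icc δ (2 * δ), (‖C_g 0‖ / 2 * δ ^ α) ^ 2 ≤ ‖g x‖ ^ 2 := by
    rintro x ⟨hδx, hx2δ⟩
    have hx0 : 0 < x := hδ.trans_le hδx
    have hxρ : dist x 0 < ρ := by rw [Real.dist_0_eq_abs, abs_of_pos hx0]; linarith
    rw [hg, norm_mul, Complex.norm_real, Real.norm_of_nonneg (by positivity), abs_of_pos hx0]
    gcongr
    exact (hC_gρ hxρ).le
  refine ⟨C_f 0 / 2 * (‖C_g 0‖ / 2 * δ ^ α) ^ 2 * 2 ^ (β - 1) * δ ^ β,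
    by have := norm_pos_iff.2 hC_g0; positivity, ?_⟩
  filter_upwards [eventually_gt_atTop (2 * δ / ε), eventually_gt_atTop 0] with a haε ha
  exact rpow_le_integral_mul_comp_mul hβ hδ ha ((div_lt_iff₀ hε).mp haε)
    (by positivity) (sq_nonneg _) hf_lower hg_lower hf0 (fun _ => sq_nonneg _) (hint a)

lemma norm_integral_integral_integral_le {X Y Z E : Type*} [MeasurableSpace X] [MeasurableSpace Y]
    [MeasurableSpace Z] [NormedAddCommGroup E] [NormedSpace ℝ E] {μ : Measure X} {ν : Measure Y}
    {ρ : Measure Z} {F : X → Y → Z → E} {u : X → ℝ} {v : Y → ℝ} {w : Z → ℝ}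
    (hu : Integrable u μ) (hv : Integrable v ν) (hw : Integrable w ρ)
    (hF : ∀ x y z, ‖F x y z‖ ≤ u x * v y * w z) :
    ‖∫ x, ∫ y, ∫ z, F x y z ∂ρ ∂ν ∂μ‖ ≤ (∫ x, u x ∂μ) * (∫ y, v y ∂ν) * ∫ z, w z ∂ρ := by
  have h₃ : ∀ x y, ‖∫ z, F x y z ∂ρ‖ ≤ u x * v y * ∫ z, w z ∂ρ := fun x y =>
    (norm_integral_le_of_norm_le (hw.const_mul _) (ae_of_all _ (hF x y))).trans_eq
      (integral_const_mul _ _)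
  have h₂ : ∀ x, ‖∫ y, ∫ z, F x y z ∂ρ ∂ν‖ ≤ u x * (∫ y, v y ∂ν) * ∫ z, w z ∂ρ := fun x =>
    (norm_integral_le_of_norm_le ((hv.const_mul (u x)).mul_const _) (ae_of_all _ (h₃ x))).trans_eq
      (by rw [integral_mul_const, integral_const_mul])
  exact (norm_integral_le_of_norm_le ((hu.mul_const _).mul_const _) (ae_of_all _ h₂)).trans_eq
    (by rw [integral_mul_const, integral_mul_const])

lemma integrable_mul_norm_comp_mul_pow {f : ℝ → ℝ} {g : ℝ → ℂ} {P : ℝ} (hf : Integrable f)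
    (hg : Continuous g) (hgP : ∀ x, ‖g x‖ ≤ P) (n : ℕ) (a : ℝ) :
    Integrable fun l => f l * ‖g (a * l)‖ ^ n :=
  hf.mul_bdd ((hg.comp (continuous_const_mul a)).norm.pow n).aestronglyMeasurable
    (ae_of_all _ fun l => by
      rw [norm_pow, norm_norm]
      exact pow_le_pow_left₀ (norm_nonneg _) (hgP _) n)

lemma norm_integral_triple_product_le {f : ℝ → ℝ} {g k : ℝ → ℂ} {P s t t₂ : ℝ}
    (hf0 : ∀ x, 0 ≤ f x) (hf : Integrable f) (hg : Continuous g) (hgP : ∀ x, ‖g x‖ ≤ P)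
    (hs : 0 ≤ s) (hk : ∀ l, k l = (((Real.sqrt s)⁻¹ * f l : ℝ) : ℂ) * starRingEnd ℂ (g (t * l))) :
    ‖∫ l₁, ∫ l₂, ∫ l₃, ((‖g (t₂ * l₁)‖ ^ 2 : ℝ) : ℂ) * g (t * (l₁ + l₂)) * g (t * (l₃ - l₁)) *
        ((f l₁ : ℝ) : ℂ) * k l₂ * k l₃‖
      ≤ P ^ 2 * (∫ l, f l * ‖g (t₂ * l)‖ ^ 2) * (∫ l, f l * ‖g (t * l)‖) ^ 2 / s := by
  have hk_norm : ∀ l, ‖k l‖ = (Real.sqrt s)⁻¹ * (f l * ‖g (t * l)‖ ^ 1) := fun l => by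
    rw [hk, norm_mul, Complex.norm_real, Complex.norm_conj, Real.norm_of_nonneg
      (mul_nonneg (by positivity) (hf0 l)), pow_one, mul_assoc]
  have hk_int : Integrable fun l => ‖k l‖ := by
    simp_rw [hk_norm]
    exact (integrable_mul_norm_comp_mul_pow hf hg hgP 1 t).const_mul _
  have hpt : ∀ l₁ l₂ l₃, ‖((‖g (t₂ * l₁)‖ ^ 2 : ℝ) : ℂ) * g (t * (l₁ + l₂)) * g (t * (l₃ - l₁)) *
      ((f l₁ : ℝ) : ℂ) * k l₂ * k l₃‖ ≤ P ^ 2 * (f l₁ * ‖g (t₂ * l₁)‖ ^ 2) * ‖k l₂‖ * ‖k l₃‖ := by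
    intro l₁ l₂ l₃
    have h₁ := hgP (t * (l₁ + l₂))
    have h₂ := hgP (t * (l₃ - l₁))
    simp only [norm_mul, Complex.norm_real, Real.norm_of_nonneg (sq_nonneg ‖g (t₂ * l₁)‖),
      Real.norm_of_nonneg (hf0 l₁)]
    calc _ = (f l₁ * ‖g (t₂ * l₁)‖ ^ 2 * ‖k l₂‖ * ‖k l₃‖) *
          (‖g (t * (l₁ + l₂))‖ * ‖g (t * (l₃ - l₁))‖) := by ring
      _ ≤ (f l₁ * ‖g (t₂ * l₁)‖ ^ 2 * ‖k l₂‖ * ‖k l₃‖) * (P * P) := by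
          have := hf0 l₁
          have := (norm_nonneg _).trans (hgP 0)
          gcongr
      _ = _ := by ring
  refine (norm_integral_integral_integral_le
    ((integrable_mul_norm_comp_mul_pow hf hg hgP 2 t₂).const_mul _) hk_int hk_int hpt).trans_eq ?_
  simp_rw [hk_norm, pow_one]
  rw [integral_const_mul, integral_const_mul, inv_mul_eq_div, mul_assoc, div_mul_div_comm,
    Real.mul_self_sqrt hs]
  ring

lemma norm_integral_triple_product_le_rpow {f : ℝ → ℝ} {g k : ℝ → ℂ}
    {P s t t₂ β c D₁ D₂ : ℝ} (hf0 : ∀ x, 0 ≤ f x) (hf : Integrable f) (hg : Continuous g)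
    (hgP : ∀ x, ‖g x‖ ≤ P) (ht : 0 < t) (hc : 0 < c) (hs : c * t ^ (-β) ≤ s)
    (hD₁ : ∫ l, f l * ‖g (t * l)‖ ≤ D₁ * t ^ (-β))
    (hD₂ : ∫ l, f l * ‖g (t₂ * l)‖ ^ 2 ≤ D₂ * t₂ ^ (-β))
    (hk : ∀ l, k l = (((Real.sqrt s)⁻¹ * f l : ℝ) : ℂ) * starRingEnd ℂ (g (t * l))) :
    ‖∫ l₁, ∫ l₂, ∫ l₃, ((‖g (t₂ * l₁)‖ ^ 2 : ℝ) : ℂ) * g (t * (l₁ + l₂)) * g (t * (l₃ - l₁)) *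
        ((f l₁ : ℝ) : ℂ) * k l₂ * k l₃‖
      ≤ P ^ 2 * D₂ * D₁ ^ 2 / c * (t ^ (-β) * t₂ ^ (-β)) := by
  have hs₀ : 0 ≤ s := hs.trans' (by positivity)
  have hS₁ : 0 ≤ ∫ l, f l * ‖g (t * l)‖ :=
    integral_nonneg fun l => mul_nonneg (hf0 l) (norm_nonneg _)
  have hS₂ : 0 ≤ ∫ l, f l * ‖g (t₂ * l)‖ ^ 2 :=
    integral_nonneg fun l => mul_nonneg (hf0 l) (sq_nonneg _)
  have hnum : 0 ≤ P ^ 2 * (D₂ * t₂ ^ (-β)) := mul_nonneg (sq_nonneg P) (hS₂.trans hD₂)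
  calc _ ≤ P ^ 2 * (∫ l, f l * ‖g (t₂ * l)‖ ^ 2) * (∫ l, f l * ‖g (t * l)‖) ^ 2 / s :=
        norm_integral_triple_product_le hf0 hf hg hgP hs₀ hk
    _ ≤ P ^ 2 * (D₂ * t₂ ^ (-β)) * (D₁ * t ^ (-β)) ^ 2 / (c * t ^ (-β)) := by gcongr
    _ = _ := by field_simp

lemma rpow_neg_natCast_mul {x : ℝ} (hx : 0 ≤ x) (n : ℕ) (β : ℝ) :
    x ^ (-(n : ℝ) * β) = (x ^ n) ^ (-β) := by
  rw [← Real.rpow_natCast, ← Real.rpow_mul hx, neg_mul, mul_neg]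

theorem stmt_17_general
    (β : ℝ) (hβ : β ∈ Set.Ioo (0 : ℝ) 1)
    (C_G : ℝ → ℝ) (hCG_cont : Continuous C_G) (hCG_bdd : ∃ M : ℝ, ∀ x, C_G x ≤ M)
    (hCG0 : 0 < C_G 0)
    (f_G : ℝ → ℝ) (hfG_nonneg : ∀ x, 0 ≤ f_G x)
    (hfG : ∀ x : ℝ, x ≠ 0 → f_G x = C_G x * |x| ^ (β - 1))
    (hfG_int : Integrable f_G)
    (ψ : ℝ → ℝ)
    (α K κ : ℝ) (hα : 1 ≤ α) (hκ : 0 < κ)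
    (Cψ : ℝ → ℂ) (hCψ_cont : Continuous Cψ)
    (hCψ0 : 0 < (Cψ 0).re ∧ (Cψ 0).im = 0)
    (hCψ_bdd : ∀ l : ℝ, ‖Cψ l‖ ≤ K * Real.exp (-κ * |l|))
    (hhat : ∀ l : ℝ, fhat ψ l = Cψ l * ((|l| ^ α : ℝ) : ℂ))
    (sigma2 : ℕ → ℝ)
    (hsigma2 : ∀ j : ℕ, sigma2 j =
      ∫ l : ℝ, f_G l * ‖fhat ψ ((2 : ℝ) ^ j * l)‖ ^ 2)
    (fc : ℕ → ℝ → ℂ)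
    (hfc : ∀ j : ℕ, ∀ l : ℝ,
      fc j l = ((((Real.sqrt (sigma2 j))⁻¹ * f_G l : ℝ)) : ℂ) *
        (starRingEnd ℂ) (fhat ψ ((2 : ℝ) ^ j * l)))
    (j₂ : ℕ → ℕ) :
    ∃ Cst > (0 : ℝ), ∃ J : ℕ, ∀ j ≥ J,
      ‖(∫ l₁ : ℝ, ∫ l₂ : ℝ, ∫ l₃ : ℝ,
          ((‖fhat ψ ((2 : ℝ) ^ (j₂ j) * l₁)‖ ^ 2 : ℝ) : ℂ) *
            fhat ψ ((2 : ℝ) ^ j * (l₁ + l₂)) * fhat ψ ((2 : ℝ) ^ j * (l₃ - l₁)) *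
            ((f_G l₁ : ℝ) : ℂ) * fc j l₂ * fc j l₃)‖
      ≤ Cst * ((2 : ℝ) ^ (-(j : ℝ) * β) * (2 : ℝ) ^ (-(j₂ j : ℝ) * β)) := by
  obtain ⟨hβ0, hβ1⟩ := hβ
  obtain ⟨M, hM⟩ := hCG_bdd
  have hP := norm_fhat_le ψ
  have hcont : Continuous (fhat ψ) := by
    rw [funext hhat]; exact continuous_mul_abs_rpow hCψ_cont (by linarith)
  have hdecay : ∀ l, ‖fhat ψ l‖ ≤ K * |l| ^ α * Real.exp (-κ * |l|) := fun l => by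
    rw [hhat]; exact norm_mul_abs_rpow_le (hCψ_bdd l)
  have hfG_le : ∀ x ≠ 0, f_G x ≤ M * |x| ^ (β - 1) := fun x hx => by
    rw [hfG x hx]; exact mul_le_mul_of_nonneg_right (hM x) (by positivity)
  obtain ⟨D₁, hD₁⟩ := exists_integral_mul_norm_comp_mul_pow_le_rpow (by linarith) hκ hfG_nonneg
    hfG_le hcont.aestronglyMeasurable hP hdecay one_ne_zero
  obtain ⟨D₂, hD₂⟩ := exists_integral_mul_norm_comp_mul_pow_le_rpow (by linarith) hκ hfG_nonneg
    hfG_le hcont.aestronglyMeasurable hP hdecay two_ne_zero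
  obtain ⟨c, hc, hlow⟩ := exists_rpow_le_integral_mul_norm_comp_mul_sq hβ1.le (by linarith)
    hCG_cont.continuousAt hCG0 hfG_nonneg hfG hCψ_cont.continuousAt
    (fun h => by simp [h] at hCψ0) hhat (integrable_mul_norm_comp_mul_pow hfG_int hcont hP 2)
  obtain ⟨J, hJ⟩ :=
    eventually_atTop.1 ((tendsto_pow_atTop_atTop_of_one_lt one_lt_two).eventually hlow)
  refine ⟨max ((∫ t, |ψ t|) ^ 2 * D₂ * D₁ ^ 2 / c) 1, by positivity, J, fun j hj => ?_⟩
  rw [rpow_neg_natCast_mul zero_le_two, rpow_neg_natCast_mul zero_le_two]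
  refine (norm_integral_triple_product_le_rpow hfG_nonneg hfG_int hcont hP (by positivity) hc
    ((hsigma2 j).symm ▸ hJ j hj) (by simpa using hD₁ _ (by positivity)) (hD₂ _ (by positivity))
    (hfc j)).trans ?_
  gcongr
  exact le_max_left _ _

theorem stmt_17
    (β : ℝ) (hβ : β ∈ Set.Ioo (0 : ℝ) 1)
    (C_G : ℝ → ℝ) (hCG_cont : Continuous C_G) (hCG_bdd : ∃ M : ℝ, ∀ x, C_G x ≤ M)
    (hCG_nonneg : ∀ x, 0 ≤ C_G x) (hCG_even : ∀ x, C_G (-x) = C_G x)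
    (hCG0 : 0 < C_G 0)
    (f_G : ℝ → ℝ) (hfG_nonneg : ∀ x, 0 ≤ f_G x)
    (hfG : ∀ x : ℝ, x ≠ 0 → f_G x = C_G x * |x| ^ (β - 1))
    (hfG_int : Integrable f_G)
    (ψ : ℝ → ℝ) (hψ_int : Integrable ψ) (hψ_sq : Integrable (fun t => (ψ t) ^ 2))
    (hψ_zero : (∫ t : ℝ, ψ t) = 0)
    (α K κ : ℝ) (hα : 1 ≤ α) (hK : 0 < K) (hκ : 0 < κ)
    (Cψ : ℝ → ℂ) (hCψ_cont : Continuous Cψ)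
    (hCψ0 : 0 < (Cψ 0).re ∧ (Cψ 0).im = 0)
    (hCψ_bdd : ∀ l : ℝ, ‖Cψ l‖ ≤ K * Real.exp (-κ * |l|))
    (hhat : ∀ l : ℝ, fhat ψ l = Cψ l * ((|l| ^ α : ℝ) : ℂ))
    (sigma2 : ℕ → ℝ)
    (hsigma2 : ∀ j : ℕ, sigma2 j =
      ∫ l : ℝ, f_G l * ‖fhat ψ ((2 : ℝ) ^ j * l)‖ ^ 2)
    (fc : ℕ → ℝ → ℂ)
    (hfc : ∀ j : ℕ, ∀ l : ℝ,
      fc j l = ((((Real.sqrt (sigma2 j))⁻¹ * f_G l : ℝ)) : ℂ) *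
        (starRingEnd ℂ) (fhat ψ ((2 : ℝ) ^ j * l)))
    (j₂ : ℕ → ℕ)
    (hj₂ : 1 < Filter.liminf (fun j : ℕ => (j₂ j : ℝ) / (j : ℝ)) atTop) :
    ∃ Cst > (0 : ℝ), ∃ J : ℕ, ∀ j ≥ J,
      ‖(∫ l₁ : ℝ, ∫ l₂ : ℝ, ∫ l₃ : ℝ,
          ((‖fhat ψ ((2 : ℝ) ^ (j₂ j) * l₁)‖ ^ 2 : ℝ) : ℂ) *
            fhat ψ ((2 : ℝ) ^ j * (l₁ + l₂)) * fhat ψ ((2 : ℝ) ^ j * (l₃ - l₁)) *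
            ((f_G l₁ : ℝ) : ℂ) * fc j l₂ * fc j l₃)‖
      ≤ Cst * ((2 : ℝ) ^ (-(j : ℝ) * β) * (2 : ℝ) ^ (-(j₂ j : ℝ) * β)) :=
  stmt_17_general β hβ C_G hCG_cont hCG_bdd hCG0 f_G hfG_nonneg hfG hfG_int ψ α K κ hα hκ Cψ
    hCψ_cont hCψ0 hCψ_bdd hhat sigma2 hsigma2 fc hfc j₂
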